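/- For every pair x ≠ y in X, with r = d_h(x,y) ≥ 1, and every t ≥ 0, the off-diagonal heat kernel of the hierarchical Laplacian equals p(t,x,y) = −e^{−p^{r−1} t}/ν^r + (1 − 1/ν) Σ_{s=r}^∞ e^{−p^s t}/ν^s. -/

import Mathlib

noncomputable section
open scoped ENNReal

def HX (ν : ℕ) : Type := {x : ℕ → Fin ν // ∃ N, ∀ n, N ≤ n → (x n : ℕ) = 0}
instance (ν : ℕ) : DecidableEq (HX ν) := Classical.decEq _
abbrev Hl2 (ν : ℕ) : Type := lp (fun _ : HX ν => ℝ) 2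
def cube (ν : ℕ) (r : ℕ) (x : HX ν) : Set (HX ν) := {y | ∀ n, r ≤ n → y.1 n = x.1 n}
/-- Hierarchical distance `d_h(x,y) = min {r ≥ 0 : y ∈ Q^{(r)}(x)}`. -/
def dh (ν : ℕ) (x y : HX ν) : ℕ := sInf {r : ℕ | y ∈ cube ν r x}
def hdelta (ν : ℕ) (x : HX ν) : Hl2 ν := lp.single 2 x 1
def cubeSum (ν r : ℕ) (x : HX ν) (ψ : Hl2 ν) : ℝ := ∑' y : cube ν r x, ψ y
def IsHierLap (ν : ℕ) (p : ℝ) (Δ : Hl2 ν →L[ℝ] Hl2 ν) : Prop :=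
  ∀ ψ x, Δ ψ x = ∑' r : ℕ,
    (1 - p) * p ^ r * (((ν : ℝ) ^ (r + 1))⁻¹ * cubeSum ν (r + 1) x ψ - ψ x)

/-- Heat kernel `p(t,x,y) = ⟨exp(tΔ_h) δ_y, δ_x⟩`. -/
def heatK (ν : ℕ) (Δ : Hl2 ν →L[ℝ] Hl2 ν) (t : ℝ) (x y : HX ν) : ℝ :=
  @inner ℝ _ _ (NormedSpace.exp (t • Δ) (hdelta ν y)) (hdelta ν x)

/-!
For `s ≥ 0` put `w_s = ν⁻ˢ 𝟙_{Q⁽ˢ⁾(y)} - ν⁻⁽ˢ⁺¹⁾ 𝟙_{Q⁽ˢ⁺¹⁾(y)}`. Averaging over a cube of rank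
`m` leaves `w_s` unchanged when `m ≤ s` (it is constant on such cubes) and kills it when `m > s`
(it has mean zero and lives in one cube of rank `s + 1`), so `Δ_h w_s = -(∑_{m > s} a_m) w_s
= -pˢ w_s`. The `w_s` telescope to `δ_y` in `ℓ²`, hence
`exp(tΔ_h) δ_y = ∑ e^{-pˢt} w_s`, and evaluating at `x`, only the terms `s ≥ d_h(x,y) - 1`
survive.
-/

lemma hasSum_ite_le_pow {p : ℝ} (hp0 : 0 ≤ p) (hp1 : p < 1) (s : ℕ) :
    HasSum (fun r => if s ≤ r then p ^ r else 0) (p ^ s / (1 - p)) := by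
  rw [← hasSum_nat_add_iff' s, Finset.sum_eq_zero fun r hr => if_neg (by simpa using hr),
    sub_zero]
  simpa [pow_add, mul_comm, div_eq_mul_inv] using
    (hasSum_geometric_of_lt_one hp0 hp1).mul_left (p ^ s)

lemma tsum_mul_ite_sub_ite {f a : ℕ → ℝ} {r : ℕ} (hr : 1 ≤ r)
    (hf : Summable fun s =>
      f s * ((if r ≤ s then a s else 0) - if r ≤ s + 1 then a (s + 1) else 0)) :
    ∑' s, f s * ((if r ≤ s then a s else 0) - if r ≤ s + 1 then a (s + 1) else 0) =
      -(f (r - 1) * a r) + ∑' s, f (r + s) * (a (r + s) - a (r + s + 1)) := by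
  obtain ⟨k, rfl⟩ := Nat.exists_eq_add_of_le' hr
  rw [← hf.sum_add_tsum_nat_add (k + 1), Finset.sum_range_succ,
    Finset.sum_eq_zero fun i hi => by
      rw [Finset.mem_range] at hi
      rw [if_neg (by omega), if_neg (by omega), sub_zero, mul_zero]]
  congr 1
  · rw [if_neg (by omega), if_pos le_rfl]
    simp
  · refine tsum_congr fun i => ?_
    rw [if_pos (by omega), if_pos (by omega), add_comm i, add_assoc]

lemma exp_apply_of_eq_smul {E : Type*} [NormedAddCommGroup E] [NormedSpace ℝ E]
    [CompleteSpace E] {A : E →L[ℝ] E} {c : ℝ} {w : E} (h : A w = c • w) :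
    NormedSpace.exp A w = Real.exp c • w := by
  have hpow : ∀ n : ℕ, (A ^ n) w = c ^ n • w := by
    intro n
    induction n with
    | zero => simp
    | succ n ih => rw [pow_succ', mul_apply_eq_comp, ih, map_smul, h, smul_smul, pow_succ]
  have hA := (NormedSpace.exp_series_hasSum_exp' (𝕂 := ℝ) A).mapL
    (ContinuousLinearMap.apply ℝ E w)
  have hc := (NormedSpace.exp_series_hasSum_exp' (𝕂 := ℝ) c).smul_const w
  simp only [ContinuousLinearMap.apply_apply, smul_apply, hpow, smul_smul] at hA
  rw [Real.exp_eq_exp_ℝ]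
  exact hA.unique (by simpa [smul_eq_mul] using hc)

namespace HierarchicalLaplacian

variable {ν : ℕ} {r s m : ℕ} {x y z u : HX ν}

lemma self_mem_cube (r : ℕ) (x : HX ν) : x ∈ cube ν r x := fun _ _ => rfl

lemma cube_mono (h : r ≤ s) (x : HX ν) : cube ν r x ⊆ cube ν s x :=
  fun _ hz n hn => hz n (h.trans hn)

lemma mem_cube_comm : x ∈ cube ν r y ↔ y ∈ cube ν r x :=
  ⟨fun h n hn => (h n hn).symm, fun h n hn => (h n hn).symm⟩

lemma mem_cube_trans (hxy : x ∈ cube ν r y) (hyz : y ∈ cube ν r z) : x ∈ cube ν r z :=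
  fun n hn => (hxy n hn).trans (hyz n hn)

lemma cube_eq_of_mem (h : z ∈ cube ν r y) : cube ν r z = cube ν r y :=
  Set.ext fun _ => ⟨fun hu => mem_cube_trans hu h,
    fun hu => mem_cube_trans hu (mem_cube_comm.1 h)⟩

lemma mem_cube_iff_of_mem_cube (h : m ≤ s) (hu : u ∈ cube ν m z) :
    u ∈ cube ν s y ↔ z ∈ cube ν s y :=
  ⟨fun huy => mem_cube_trans (mem_cube_comm.1 (cube_mono h z hu)) huy,
    fun hzy => mem_cube_trans (cube_mono h z hu) hzy⟩

lemma cube_zero (x : HX ν) : cube ν 0 x = {x} :=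
  Set.ext fun _ => ⟨fun h => Subtype.ext (funext fun n => h n n.zero_le),
    fun h => h ▸ self_mem_cube 0 x⟩

def cubeEquivFun (r : ℕ) (x : HX ν) : cube ν r x ≃ (Fin r → Fin ν) where
  toFun z i := z.1.1 i
  invFun f :=
    ⟨⟨fun n => if h : n < r then f ⟨n, h⟩ else x.1 n, by
        obtain ⟨N, hN⟩ := x.2
        exact ⟨max r N, fun n hn => by
          simpa [dif_neg (not_lt.2 ((le_max_left r N).trans hn))]
            using hN n ((le_max_right r N).trans hn)⟩⟩,
      fun n hn => dif_neg (not_lt.2 hn)⟩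
  left_inv z := by
    apply Subtype.ext; apply Subtype.ext; funext n
    by_cases h : n < r
    · simp [h]
    · simp [h, z.2 n (not_lt.1 h)]
  right_inv f := by
    funext i
    simp

instance (r : ℕ) (x : HX ν) : Fintype (cube ν r x) :=
  Fintype.ofEquiv _ (cubeEquivFun r x).symm

lemma card_cube (r : ℕ) (x : HX ν) : Fintype.card (cube ν r x) = ν ^ r := by
  simp [Fintype.card_congr (cubeEquivFun r x)]

lemma mem_cube_iff_dh_le : x ∈ cube ν s y ↔ dh ν x y ≤ s := by
  have hne : {r : ℕ | y ∈ cube ν r x}.Nonempty := by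
    obtain ⟨N₁, h₁⟩ := x.2
    obtain ⟨N₂, h₂⟩ := y.2
    exact ⟨max N₁ N₂, fun n hn => Fin.ext <|
      (h₂ n ((le_max_right _ _).trans hn)).trans (h₁ n ((le_max_left _ _).trans hn)).symm⟩
  refine ⟨fun h => Nat.sInf_le (mem_cube_comm.1 h), fun h => ?_⟩
  exact mem_cube_comm.1 (cube_mono h x (Nat.sInf_mem hne))

lemma one_le_dh (hxy : x ≠ y) : 1 ≤ dh ν x y := by
  by_contra h
  have := mem_cube_iff_dh_le.2 (Nat.le_of_lt_succ (not_le.1 h))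
  rw [cube_zero] at this
  exact hxy this

def cubeDensity (s : ℕ) (y : HX ν) : HX ν → ℝ :=
  (cube ν s y).indicator fun _ => ((ν : ℝ) ^ s)⁻¹

lemma cubeDensity_of_mem (h : u ∈ cube ν s y) : cubeDensity s y u = ((ν : ℝ) ^ s)⁻¹ :=
  Set.indicator_of_mem h _

lemma cubeDensity_of_notMem (h : u ∉ cube ν s y) : cubeDensity s y u = 0 :=
  Set.indicator_of_notMem h _

lemma cubeDensity_apply (s : ℕ) (y u : HX ν) :
    cubeDensity s y u = if dh ν u y ≤ s then ((ν : ℝ) ^ s)⁻¹ else 0 := by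
  by_cases h : u ∈ cube ν s y
  · rw [cubeDensity_of_mem h, if_pos (mem_cube_iff_dh_le.1 h)]
  · rw [cubeDensity_of_notMem h, if_neg (mem_cube_iff_dh_le.not.1 h)]

lemma cubeDensity_eq_zero_of_notMem_toFinset (s : ℕ) (y : HX ν) :
    ∀ u ∉ (cube ν s y).toFinset, cubeDensity s y u = 0 :=
  fun _ hu => cubeDensity_of_notMem (Set.mem_toFinset.not.1 hu)

lemma sum_cube_const (r : ℕ) (x : HX ν) (c : ℝ) :
    ∑ _u ∈ (cube ν r x).toFinset, c = (ν : ℝ) ^ r * c := by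
  rw [Finset.sum_const, Set.toFinset_card, card_cube, nsmul_eq_mul, Nat.cast_pow]

lemma tsum_cubeDensity (hν : ν ≠ 0) (s : ℕ) (y : HX ν) : ∑' u, cubeDensity s y u = 1 := by
  rw [tsum_eq_sum (cubeDensity_eq_zero_of_notMem_toFinset s y),
    Finset.sum_congr rfl fun u hu => cubeDensity_of_mem (Set.mem_toFinset.1 hu),
    sum_cube_const]
  exact mul_inv_cancel₀ (by positivity)

lemma tsum_sq_cubeDensity (hν : ν ≠ 0) (s : ℕ) (y : HX ν) :
    ∑' u, cubeDensity s y u * cubeDensity s y u = (ν : ℝ)⁻¹ ^ s := by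
  rw [tsum_eq_sum fun u hu => by rw [cubeDensity_eq_zero_of_notMem_toFinset s y u hu, zero_mul],
    Finset.sum_congr rfl fun u hu => by rw [cubeDensity_of_mem (Set.mem_toFinset.1 hu)],
    sum_cube_const, inv_pow]
  field_simp

lemma memℓp_cubeDensity (s : ℕ) (y : HX ν) : Memℓp (cubeDensity s y) 2 :=
  (memℓp_zero <| (cube ν s y).toFinite.subset fun _ hu => by
    by_contra h
    exact hu (cubeDensity_of_notMem h)).of_exponent_ge bot_le

def cubeVec (s : ℕ) (y : HX ν) : Hl2 ν := ⟨cubeDensity s y, memℓp_cubeDensity s y⟩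

@[simp]
lemma cubeVec_apply (s : ℕ) (y u : HX ν) : cubeVec s y u = cubeDensity s y u := rfl

lemma cubeVec_zero (y : HX ν) : cubeVec 0 y = hdelta ν y := by
  ext u
  by_cases h : u = y
  · subst h
    simp [hdelta, cubeDensity_of_mem (self_mem_cube 0 u)]
  · simp [hdelta, h, cubeDensity_of_notMem (by rwa [cube_zero] : u ∉ cube ν 0 y)]

lemma inner_hdelta_right (f : Hl2 ν) (x : HX ν) : inner ℝ f (hdelta ν x) = f x := by
  simp [hdelta, lp.inner_single_right]

lemma norm_cubeVec (hν : ν ≠ 0) (s : ℕ) (y : HX ν) :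
    ‖cubeVec s y‖ = √(ν : ℝ)⁻¹ ^ s := by
  have hsq : ‖cubeVec s y‖ ^ 2 = (√(ν : ℝ)⁻¹ ^ s) ^ 2 := by
    rw [← real_inner_self_eq_norm_sq, lp.inner_eq_tsum, ← pow_mul, mul_comm, pow_mul,
      Real.sq_sqrt (by positivity)]
    exact tsum_sq_cubeDensity hν s y
  exact (pow_left_inj₀ (norm_nonneg _) (by positivity) two_ne_zero).1 hsq

lemma cubeSum_cubeVec (hν : ν ≠ 0) (m s : ℕ) (z y : HX ν) :
    cubeSum ν m z (cubeVec s y) = (ν : ℝ) ^ m * cubeVec (max m s) y z := by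
  rw [cubeSum, tsum_fintype,
    ← Finset.sum_subtype (cube ν m z).toFinset fun _ => Set.mem_toFinset]
  rcases le_total m s with hms | hsm
  · rw [max_eq_right hms, ← sum_cube_const]
    refine Finset.sum_congr rfl fun u hu => ?_
    have huz := mem_cube_iff_of_mem_cube (y := y) hms (Set.mem_toFinset.1 hu)
    simp only [cubeVec_apply]
    by_cases hzy : z ∈ cube ν s y
    · rw [cubeDensity_of_mem hzy, cubeDensity_of_mem (huz.2 hzy)]
    · rw [cubeDensity_of_notMem hzy, cubeDensity_of_notMem (huz.not.2 hzy)]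
  rw [max_eq_left hsm]
  by_cases hzy : z ∈ cube ν m y
  · have hsupp : ∀ u ∉ (cube ν m z).toFinset, cubeDensity s y u = 0 := fun u hu =>
      cubeDensity_of_notMem fun hus => hu <| Set.mem_toFinset.2 <| by
        rw [cube_eq_of_mem hzy]; exact cube_mono hsm y hus
    rw [cubeVec_apply, cubeDensity_of_mem hzy, mul_inv_cancel₀ (by positivity),
      ← tsum_cubeDensity hν s y, tsum_eq_sum hsupp]
    rfl
  · rw [cubeVec_apply, cubeDensity_of_notMem hzy, mul_zero]
    refine Finset.sum_eq_zero fun u hu => cubeDensity_of_notMem fun hus => hzy ?_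
    exact mem_cube_trans (mem_cube_comm.1 (Set.mem_toFinset.1 hu)) (cube_mono hsm y hus)

def haarVec (s : ℕ) (y : HX ν) : Hl2 ν := cubeVec s y - cubeVec (s + 1) y

lemma haarVec_apply (x y : HX ν) (s : ℕ) :
    haarVec s y x = (if dh ν x y ≤ s then ((ν : ℝ) ^ s)⁻¹ else 0) -
      (if dh ν x y ≤ s + 1 then ((ν : ℝ) ^ (s + 1))⁻¹ else 0) := by
  simp only [haarVec, lp.coeFn_sub, Pi.sub_apply, cubeVec_apply, cubeDensity_apply]

lemma cubeSum_haarVec (hν : ν ≠ 0) (m s : ℕ) (z y : HX ν) :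
    cubeSum ν m z (haarVec s y) = if m ≤ s then (ν : ℝ) ^ m * haarVec s y z else 0 := by
  have hsum : cubeSum ν m z (haarVec s y) =
      cubeSum ν m z (cubeVec s y) - cubeSum ν m z (cubeVec (s + 1) y) := by
    rw [cubeSum, cubeSum, cubeSum, tsum_fintype, tsum_fintype, tsum_fintype,
      ← Finset.sum_sub_distrib]
    rfl
  rw [hsum, cubeSum_cubeVec hν, cubeSum_cubeVec hν, ← mul_sub]
  split_ifs with hms
  · rw [max_eq_right hms, max_eq_right (hms.trans s.le_succ)]
    rfl
  · rw [max_eq_left (by omega), max_eq_left (by omega), sub_self, mul_zero]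

lemma hierLap_haarVec (hν : ν ≠ 0) {p : ℝ} (hp0 : 0 ≤ p) (hp1 : p < 1)
    {Δ : Hl2 ν →L[ℝ] Hl2 ν} (hΔ : IsHierLap ν p Δ) (s : ℕ) (y : HX ν) :
    Δ (haarVec s y) = (-p ^ s) • haarVec s y := by
  ext z
  have hterm : ∀ r : ℕ, (1 - p) * p ^ r * (((ν : ℝ) ^ (r + 1))⁻¹ *
      cubeSum ν (r + 1) z (haarVec s y) - haarVec s y z) =
      -((1 - p) * haarVec s y z) * if s ≤ r then p ^ r else 0 := by
    intro r
    rw [cubeSum_haarVec hν]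
    by_cases hrs : r + 1 ≤ s
    · rw [if_pos hrs, if_neg (by omega), inv_mul_cancel_left₀ (by positivity)]
      ring
    · rw [if_neg hrs, if_pos (by omega)]
      ring
  rw [hΔ, tsum_congr hterm, tsum_mul_left, (hasSum_ite_le_pow hp0 hp1 s).tsum_eq,
    lp.coeFn_smul, Pi.smul_apply, smul_eq_mul]
  field_simp [(by linarith : 1 - p ≠ 0)]

lemma summable_cubeVec (hν : 2 ≤ ν) (y : HX ν) : Summable fun s => cubeVec s y := by
  have hq : √(ν : ℝ)⁻¹ < 1 := by
    rw [Real.sqrt_lt' one_pos, one_pow, inv_lt_one₀ (by positivity)]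
    exact_mod_cast hν
  refine Summable.of_norm ?_
  simp_rw [norm_cubeVec (by omega : ν ≠ 0)]
  exact summable_geometric_of_lt_one (Real.sqrt_nonneg _) hq

-- `∑ (V_s - V_{s+1}) = ∑ V_s - ∑_{s ≥ 1} V_s = V_0 = δ_y` with `V_s = cubeVec s y`.
lemma hasSum_haarVec (hν : 2 ≤ ν) (y : HX ν) :
    HasSum (fun s => haarVec s y) (hdelta ν y) := by
  have hV := summable_cubeVec hν y
  have hsum := hV.hasSum.sub ((summable_nat_add_iff 1).2 hV).hasSum
  rwa [hV.tsum_eq_zero_add, add_sub_cancel_right, cubeVec_zero] at hsum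

end HierarchicalLaplacian

open HierarchicalLaplacian

theorem stmt6 (ν : ℕ) (hν : 2 ≤ ν) (p : ℝ) (hp0 : 0 < p) (hp1 : p < 1)
    (Δ : Hl2 ν →L[ℝ] Hl2 ν) (hΔ : IsHierLap ν p Δ) :
    ∀ x y : HX ν, x ≠ y → ∀ t : ℝ, 0 ≤ t →
      heatK ν Δ t x y =
        -(Real.exp (-(p ^ (dh ν x y - 1) * t)) / (ν : ℝ) ^ dh ν x y) +
        (1 - (ν : ℝ)⁻¹) *
          ∑' s : ℕ, Real.exp (-(p ^ (dh ν x y + s) * t)) / (ν : ℝ) ^ (dh ν x y + s) := by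
  intro x y hxy t _
  have hν0 : ν ≠ 0 := by omega
  have hexp (s : ℕ) : NormedSpace.exp (t • Δ) (haarVec s y) =
      Real.exp (-(p ^ s * t)) • haarVec s y := by
    refine exp_apply_of_eq_smul ?_
    rw [smul_apply, hierLap_haarVec hν0 hp0.le hp1 hΔ, smul_smul]
    ring_nf
  have hsum : HasSum (fun s => Real.exp (-(p ^ s * t)) * haarVec s y x) (heatK ν Δ t x y) := by
    have := ((hasSum_haarVec hν y).mapL (NormedSpace.exp (t • Δ))).mapL
      (lp.evalCLM ℝ (fun _ : HX ν => ℝ) 2 x)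
    simp only [hexp, map_smul, smul_eq_mul] at this
    rw [heatK, inner_hdelta_right]
    exact this
  rw [← hsum.tsum_eq, funext fun s => congrArg _ (haarVec_apply x y s),
    tsum_mul_ite_sub_ite (one_le_dh hxy) (by simpa only [← haarVec_apply] using hsum.summable),
    ← tsum_mul_left, div_eq_mul_inv]
  congr 1
  refine tsum_congr fun s => ?_
  rw [pow_succ, mul_inv]
  ring
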